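/- Let T = ABC be a triangle of maximum area among all triangles determined by an arrangement of lines, and let ℓ be any line of the arrangement not supporting T. Then either ℓ intersects the interior of T, or ℓ is parallel to one of the three sides of T. -/

import Mathlib

/-!
Let `f = O.eval` be the affine function vanishing on the line `O`. If `O` misses the open
triangle, `f` has weakly constant sign on its three vertices (a sign change would produce a zero
of `f` with positive barycentric coordinates), and if `O` is parallel to no side, the three values
are distinct. So one vertex `V` has strictly largest `|f|`, and replacing the side opposite `V` by
`O` dilates the triangle from `V` by the factor `f(V)² / ((f(V) - f(V')) (f(V) - f(V''))) > 1`,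
contradicting maximality.
-/

open scoped Classical

/-- A line in the plane given by the equation `a·x + b·y = c` with `(a,b) ≠ (0,0)`. -/
structure Line where
  a : ℝ
  b : ℝ
  c : ℝ
  hab : (a, b) ≠ (0, 0)

namespace Line

/-- The set of points of a line. -/
def pts (L : Line) : Set (ℝ × ℝ) := {p | L.a * p.1 + L.b * p.2 = L.c}

/-- The determinant of the directions of two lines. -/
def lineDet (L M : Line) : ℝ := L.a * M.b - L.b * M.a

/-- Two lines are parallel (possibly equal) when their directions are proportional. -/
def Parallel (L M : Line) : Prop := lineDet L M = 0

/-- The intersection point of two non-parallel lines. -/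
noncomputable def inter (L M : Line) : ℝ × ℝ :=
  ((L.c * M.b - M.c * L.b) / lineDet L M, (L.a * M.c - M.a * L.c) / lineDet L M)

end Line

/-- Standard Euclidean area of the triangle with vertices `p`, `q`, `r`. -/
noncomputable def triangleArea (p q r : ℝ × ℝ) : ℝ :=
  |(q.1 - p.1) * (r.2 - p.2) - (r.1 - p.1) * (q.2 - p.2)| / 2

/-- The area of the triangle determined by three (pairwise non-parallel) lines. -/
noncomputable def triArea (L M N : Line) : ℝ :=
  triangleArea (Line.inter L M) (Line.inter L N) (Line.inter M N)

/-- Three lines form a (non-degenerate) triangle when they are pairwise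
non-parallel and not concurrent. -/
def FormsTriangle (L M N : Line) : Prop :=
  ¬ Line.Parallel L M ∧ ¬ Line.Parallel L N ∧ ¬ Line.Parallel M N ∧
    Line.inter L M ∉ N.pts

/-- The open region bounded by the triangle formed by three lines: the interior
of the convex hull of the three pairwise intersection points. -/
noncomputable def openTriangle (L M N : Line) : Set (ℝ × ℝ) :=
  interior (convexHull ℝ {Line.inter L M, Line.inter L N, Line.inter M N})

namespace Line

def eval (L : Line) (p : ℝ × ℝ) : ℝ := L.a * p.1 + L.b * p.2 - L.c

lemma mem_pts_iff {L : Line} {p : ℝ × ℝ} : p ∈ L.pts ↔ L.eval p = 0 := by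
  simp [pts, eval, sub_eq_zero]

lemma Parallel.symm {L M : Line} (h : Parallel L M) : Parallel M L := by
  unfold Parallel lineDet at *
  linarith

lemma inter_comm (L M : Line) : inter M L = inter L M := by
  have hdet : lineDet M L = -lineDet L M := by simp only [lineDet]; ring
  simp only [inter, hdet, div_neg, ← neg_div]
  congr 2 <;> ring

lemma inter_mem_left {L M : Line} (h : ¬Parallel L M) : inter L M ∈ L.pts := by
  have hd : lineDet L M ≠ 0 := h
  simp only [pts, inter, Set.mem_ofPred_eq]
  field_simp
  simp only [lineDet]
  ring

lemma inter_mem_right {L M : Line} (h : ¬Parallel L M) : inter L M ∈ M.pts := by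
  have hd : lineDet L M ≠ 0 := h
  simp only [pts, inter, Set.mem_ofPred_eq]
  field_simp
  simp only [lineDet]
  ring

lemma eq_inter_of_mem {L M : Line} (h : ¬Parallel L M) {p : ℝ × ℝ}
    (hL : p ∈ L.pts) (hM : p ∈ M.pts) : p = inter L M := by
  have hd : lineDet L M ≠ 0 := h
  simp only [pts, Set.mem_ofPred_eq] at hL hM
  refine Prod.ext ?_ ?_
  · rw [inter, eq_div_iff hd, lineDet]
    linear_combination M.b * hL - L.b * hM
  · rw [inter, eq_div_iff hd, lineDet]
    linear_combination L.a * hM - M.a * hL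

lemma eval_lineMap (O : Line) (p q : ℝ × ℝ) (s : ℝ) :
    O.eval (AffineMap.lineMap p q s) = O.eval p + s * (O.eval q - O.eval p) := by
  simp only [eval, AffineMap.lineMap_apply_module, Prod.fst_add, Prod.snd_add,
    Prod.smul_fst, Prod.smul_snd, smul_eq_mul]
  ring

lemma eval_smul_add_smul_add_smul (O : Line) (p q r : ℝ × ℝ) {α β γ : ℝ}
    (hsum : α + β + γ = 1) :
    O.eval (α • p + β • q + γ • r) = α * O.eval p + β * O.eval q + γ * O.eval r := by
  simp only [eval, Prod.fst_add, Prod.snd_add, Prod.smul_fst, Prod.smul_snd, smul_eq_mul]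
  linear_combination O.c * hsum

lemma parallel_of_eval_eq {O L : Line} {p q : ℝ × ℝ} (hne : p ≠ q)
    (hp : p ∈ L.pts) (hq : q ∈ L.pts) (hval : O.eval p = O.eval q) : Parallel O L := by
  simp only [pts, Set.mem_ofPred_eq] at hp hq
  simp only [eval] at hval
  have hL : L.a * (q.1 - p.1) + L.b * (q.2 - p.2) = 0 := by linear_combination hq - hp
  have hO : O.a * (q.1 - p.1) + O.b * (q.2 - p.2) = 0 := by linear_combination -hval
  have hpq : q.1 - p.1 ≠ 0 ∨ q.2 - p.2 ≠ 0 := by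
    by_contra! h
    exact hne (Prod.ext (by linarith [h.1]) (by linarith [h.2]))
  rcases hpq with hpq | hpq
  · refine (mul_eq_zero.mp (?_ : lineDet O L * (q.1 - p.1) = 0)).resolve_right hpq
    unfold lineDet; linear_combination L.b * hO - O.b * hL
  · refine (mul_eq_zero.mp (?_ : lineDet O L * (q.2 - p.2) = 0)).resolve_right hpq
    unfold lineDet; linear_combination O.a * hL - L.a * hO

lemma inter_eq_lineMap {A O : Line} (h : ¬Parallel A O) {p q : ℝ × ℝ}
    (hp : p ∈ A.pts) (hq : q ∈ A.pts) (hpq : O.eval p ≠ O.eval q) :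
    inter A O = AffineMap.lineMap p q (O.eval p / (O.eval p - O.eval q)) := by
  have hpq' : O.eval p - O.eval q ≠ 0 := sub_ne_zero.mpr hpq
  refine (eq_inter_of_mem h ?_ ?_).symm
  · rw [mem_pts_iff] at hp hq ⊢
    rw [eval_lineMap, hp, hq]
    ring
  · rw [mem_pts_iff, eval_lineMap]
    field_simp
    ring

end Line

open Line

def doubleSignedArea (p q r : ℝ × ℝ) : ℝ :=
  (q.1 - p.1) * (r.2 - p.2) - (r.1 - p.1) * (q.2 - p.2)

lemma triangleArea_eq_abs (p q r : ℝ × ℝ) :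
    triangleArea p q r = |doubleSignedArea p q r| / 2 := rfl

lemma doubleSignedArea_swap12 (p q r : ℝ × ℝ) :
    doubleSignedArea q p r = -doubleSignedArea p q r := by
  unfold doubleSignedArea; ring

lemma doubleSignedArea_swap23 (p q r : ℝ × ℝ) :
    doubleSignedArea p r q = -doubleSignedArea p q r := by
  unfold doubleSignedArea; ring

lemma doubleSignedArea_rotate (p q r : ℝ × ℝ) :
    doubleSignedArea q r p = doubleSignedArea p q r := by
  unfold doubleSignedArea; ring

lemma doubleSignedArea_lineMap (p q r : ℝ × ℝ) (s t : ℝ) :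
    doubleSignedArea p (AffineMap.lineMap p q s) (AffineMap.lineMap p r t)
      = s * t * doubleSignedArea p q r := by
  simp only [doubleSignedArea, AffineMap.lineMap_apply_module, Prod.fst_add, Prod.snd_add,
    Prod.smul_fst, Prod.smul_snd, smul_eq_mul]
  ring

/-- The classical formula `2·area = D² / |d_LM d_LN d_MN|`, where `D` is the determinant of the
three coefficient rows and `N.eval (inter L M) = ±D / d_LM`. -/
lemma doubleSignedArea_inter_mul (L M N : Line) (hLM : ¬Parallel L M) (hLN : ¬Parallel L N)
    (hMN : ¬Parallel M N) :
    doubleSignedArea (inter L M) (inter L N) (inter M N) *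
        (lineDet L M * lineDet L N * lineDet M N) =
      (N.eval (inter L M) * lineDet L M) ^ 2 := by
  have d1 : lineDet L M ≠ 0 := hLM
  have d2 : lineDet L N ≠ 0 := hLN
  have d3 : lineDet M N ≠ 0 := hMN
  simp only [doubleSignedArea, inter, eval]
  field_simp
  simp only [lineDet]
  ring

lemma FormsTriangle.doubleSignedArea_ne_zero {L M N : Line} (h : FormsTriangle L M N) :
    doubleSignedArea (inter L M) (inter L N) (inter M N) ≠ 0 := by
  obtain ⟨hLM, hLN, hMN, hP⟩ := h
  have hval : N.eval (inter L M) * lineDet L M ≠ 0 :=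
    mul_ne_zero (fun h => hP (mem_pts_iff.mpr h)) hLM
  intro h0
  have := doubleSignedArea_inter_mul L M N hLM hLN hMN
  rw [h0, zero_mul] at this
  exact pow_ne_zero 2 hval this.symm

lemma FormsTriangle.triArea_pos {L M N : Line} (h : FormsTriangle L M N) :
    0 < triArea L M N := by
  rw [triArea, triangleArea_eq_abs]
  exact half_pos (abs_pos.mpr h.doubleSignedArea_ne_zero)

lemma FormsTriangle.swap23 {L M N : Line} (h : FormsTriangle L M N) : FormsTriangle L N M := by
  obtain ⟨hLM, hLN, hMN, hP⟩ := h
  refine ⟨hLN, hLM, mt Parallel.symm hMN, fun hQ => hP ?_⟩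
  rw [← eq_inter_of_mem hLM (inter_mem_left hLN) hQ]
  exact inter_mem_right hLN

lemma FormsTriangle.rotate {L M N : Line} (h : FormsTriangle L M N) : FormsTriangle M N L := by
  obtain ⟨hLM, hLN, hMN, hP⟩ := h
  refine ⟨hMN, mt Parallel.symm hLM, mt Parallel.symm hLN, fun hR => hP ?_⟩
  rw [← eq_inter_of_mem hLM hR (inter_mem_left hMN)]
  exact inter_mem_right hMN

lemma triArea_swap23 (L M N : Line) : triArea L N M = triArea L M N := by
  rw [triArea, triArea, triangleArea_eq_abs, triangleArea_eq_abs, inter_comm M N,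
    doubleSignedArea_swap12, abs_neg]

lemma triArea_rotate (L M N : Line) : triArea M N L = triArea L M N := by
  rw [triArea, triArea, triangleArea_eq_abs, triangleArea_eq_abs, inter_comm L M,
    inter_comm L N, ← doubleSignedArea_rotate]

lemma affineIndependent_of_doubleSignedArea_ne_zero {p q r : ℝ × ℝ}
    (h : doubleSignedArea p q r ≠ 0) : AffineIndependent ℝ ![p, q, r] := by
  rw [affineIndependent_iff_not_collinear]
  intro hcol
  obtain ⟨d, hd⟩ := (collinear_iff_of_mem (show p ∈ Set.range ![p, q, r] from ⟨0, rfl⟩)).mp hcol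
  obtain ⟨s, rfl⟩ := hd q ⟨1, rfl⟩
  obtain ⟨t, rfl⟩ := hd _ ⟨2, rfl⟩
  apply h
  simp only [doubleSignedArea, vadd_eq_add, Prod.fst_add, Prod.snd_add, Prod.smul_fst,
    Prod.smul_snd, smul_eq_mul]
  ring

lemma smul_add_smul_add_smul_mem_interior_convexHull {p q r : ℝ × ℝ}
    (h : doubleSignedArea p q r ≠ 0) {α β γ : ℝ} (hα : 0 < α) (hβ : 0 < β) (hγ : 0 < γ)
    (hsum : α + β + γ = 1) :
    α • p + β • q + γ • r ∈ interior (convexHull ℝ {p, q, r}) := by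
  have hind := affineIndependent_of_doubleSignedArea_ne_zero h
  have hspan : affineSpan ℝ (Set.range ![p, q, r]) = ⊤ := by
    rw [hind.affineSpan_eq_top_iff_card_eq_finrank_add_one]
    simp [Module.finrank_prod]
  let b : AffineBasis (Fin 3) ℝ (ℝ × ℝ) := ⟨![p, q, r], hind, hspan⟩
  have hb : ⇑b = ![p, q, r] := rfl
  have hw : ∑ i, ![α, β, γ] i = 1 := by simp [Fin.sum_univ_three, hsum]
  have hcomb : α • p + β • q + γ • r = Finset.univ.affineCombination ℝ b ![α, β, γ] := by
    rw [Finset.affineCombination_eq_linear_combination _ _ _ hw, hb]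
    simp [Fin.sum_univ_three]
  have hrange : Set.range b = {p, q, r} := by
    rw [hb, Matrix.range_cons, Matrix.range_cons, Matrix.range_cons_empty]
    rfl
  rw [← hrange, AffineBasis.interior_convexHull, hcomb]
  intro i
  rw [b.coord_apply_combination_of_mem (Finset.mem_univ i) hw]
  fin_cases i <;> simpa

lemma exists_pos_weights_of_pos_of_neg {u v : ℝ} (hu : 0 < u) (hv : v < 0) (w : ℝ) :
    ∃ α β γ : ℝ, 0 < α ∧ 0 < β ∧ 0 < γ ∧ α + β + γ = 1 ∧ α * u + β * v + γ * w = 0 := by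
  -- weights `a, b, 1` before normalising: `a u + b v = w⁻ - w⁺ = -w`
  have ha : 0 < -v + w⁻ / u := by have := div_nonneg (negPart_nonneg w) hu.le; linarith
  have hb : 0 < u + w⁺ / -v := by
    have := div_nonneg (posPart_nonneg w) (neg_nonneg.mpr hv.le); linarith
  set a := -v + w⁻ / u
  set b := u + w⁺ / -v
  have hzero : a * u + b * v + w = 0 := by
    have := hv.ne
    simp only [a, b]
    field_simp
    linarith [posPart_sub_negPart w]
  have hS : 0 < a + b + 1 := by linarith
  refine ⟨a / (a + b + 1), b / (a + b + 1), 1 / (a + b + 1), by positivity, by positivity,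
    by positivity, by field_simp, ?_⟩
  field_simp
  linarith

lemma exists_mem_pts_inter_interior_of_eval_pos_of_neg {p q r : ℝ × ℝ}
    (h : doubleSignedArea p q r ≠ 0) {O : Line} (hp : 0 < O.eval p) (hq : O.eval q < 0) :
    (O.pts ∩ interior (convexHull ℝ {p, q, r})).Nonempty := by
  obtain ⟨α, β, γ, hα, hβ, hγ, hsum, hzero⟩ := exists_pos_weights_of_pos_of_neg hp hq (O.eval r)
  refine ⟨α • p + β • q + γ • r, ?_,
    smul_add_smul_add_smul_mem_interior_convexHull h hα hβ hγ hsum⟩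
  rw [mem_pts_iff, eval_smul_add_smul_add_smul O p q r hsum, hzero]

lemma eval_mul_nonneg_of_disjoint_interior {p q r : ℝ × ℝ} (h : doubleSignedArea p q r ≠ 0)
    {O : Line} (hO : O.pts ∩ interior (convexHull ℝ {p, q, r}) = ∅) :
    0 ≤ O.eval p * O.eval q := by
  by_contra! hneg
  rcases mul_neg_iff.mp hneg with ⟨hp, hq⟩ | ⟨hp, hq⟩
  · exact (exists_mem_pts_inter_interior_of_eval_pos_of_neg h hp hq).ne_empty hO
  · have h' : doubleSignedArea q p r ≠ 0 := by rwa [doubleSignedArea_swap12, neg_ne_zero]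
    refine (exists_mem_pts_inter_interior_of_eval_pos_of_neg h' hq hp).ne_empty ?_
    rwa [Set.insert_comm]

lemma FormsTriangle.eval_mul_nonneg {A B C O : Line} (hT : FormsTriangle A B C)
    (hO : O.pts ∩ openTriangle A B C = ∅) :
    0 ≤ O.eval (inter A B) * O.eval (inter A C) ∧ 0 ≤ O.eval (inter A B) * O.eval (inter B C) ∧
      0 ≤ O.eval (inter A C) * O.eval (inter B C) := by
  have h := hT.doubleSignedArea_ne_zero
  refine ⟨eval_mul_nonneg_of_disjoint_interior h hO, ?_, ?_⟩
  · refine eval_mul_nonneg_of_disjoint_interior (r := inter A C) ?_ ?_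
    · rwa [doubleSignedArea_swap23, neg_ne_zero]
    · rwa [Set.pair_comm]
  · refine eval_mul_nonneg_of_disjoint_interior (r := inter A B) ?_ ?_
    · rwa [doubleSignedArea_rotate]
    · rwa [Set.pair_comm, Set.insert_comm]

lemma one_lt_div_mul_div {u v w : ℝ} (huv : 0 ≤ u * v) (huw : 0 ≤ u * w) (hv : v ^ 2 < u ^ 2)
    (hw : w ^ 2 < u ^ 2) (hvw : v ≠ w) : 1 < u / (u - v) * (u / (u - w)) := by
  have h1 : 0 < (u - v) * u := by nlinarith [sq_nonneg (u - v)]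
  have h2 : 0 < (u - w) * u := by nlinarith [sq_nonneg (u - w)]
  have hd : 0 < (u - v) * (u - w) := by nlinarith [mul_pos h1 h2]
  have hlt : (u - v) * (u - w) < u * u := by
    have : 0 < (v - w) ^ 2 := by have := sub_ne_zero.mpr hvw; positivity
    rcases lt_or_gt_of_ne (show u ≠ 0 by rintro rfl; nlinarith) with hu | hu
    · have : v ≤ 0 := by nlinarith
      have : w ≤ 0 := by nlinarith
      nlinarith
    · have : 0 ≤ v := by nlinarith
      have : 0 ≤ w := by nlinarith
      nlinarith
  rwa [div_mul_div_comm, one_lt_div hd]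

lemma FormsTriangle.triArea_lt_of_replace {A B C O : Line} (hT : FormsTriangle A B C)
    (hOA : ¬Parallel O A) (hOB : ¬Parallel O B)
    (huv : 0 ≤ O.eval (inter A B) * O.eval (inter A C))
    (huw : 0 ≤ O.eval (inter A B) * O.eval (inter B C))
    (hv : O.eval (inter A C) ^ 2 < O.eval (inter A B) ^ 2)
    (hw : O.eval (inter B C) ^ 2 < O.eval (inter A B) ^ 2)
    (hvw : O.eval (inter A C) ≠ O.eval (inter B C)) :
    FormsTriangle A B O ∧ triArea A B C < triArea A B O := by
  have hpos := hT.triArea_pos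
  obtain ⟨hAB, hAC, hBC, -⟩ := hT
  set u := O.eval (inter A B)
  set v := O.eval (inter A C)
  set w := O.eval (inter B C)
  have hu : u ≠ 0 := by rintro h; rw [h] at hv; nlinarith
  have huv' : u ≠ v := by rintro h; rw [h] at hv; exact lt_irrefl _ hv
  have huw' : u ≠ w := by rintro h; rw [h] at hw; exact lt_irrefl _ hw
  have hQ : inter A O = AffineMap.lineMap (inter A B) (inter A C) (u / (u - v)) :=
    inter_eq_lineMap (mt Parallel.symm hOA) (inter_mem_left hAB) (inter_mem_left hAC) huv'
  have hR : inter B O = AffineMap.lineMap (inter A B) (inter B C) (u / (u - w)) :=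
    inter_eq_lineMap (mt Parallel.symm hOB) (inter_mem_right hAB) (inter_mem_left hBC) huw'
  have hscale := one_lt_div_mul_div huv huw hv hw hvw
  refine ⟨⟨hAB, mt Parallel.symm hOA, mt Parallel.symm hOB, fun h => hu (mem_pts_iff.mp h)⟩, ?_⟩
  have harea : triArea A B O = u / (u - v) * (u / (u - w)) * triArea A B C := by
    rw [triArea, triArea, hQ, hR, triangleArea_eq_abs, triangleArea_eq_abs,
      doubleSignedArea_lineMap, abs_mul, abs_of_pos (by linarith)]
    ring
  rw [harea]
  exact lt_mul_left hpos hscale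

lemma sq_ne_sq_of_mul_nonneg {x y : ℝ} (h : x ≠ y) (hxy : 0 ≤ x * y) : x ^ 2 ≠ y ^ 2 := by
  intro hsq
  rcases sq_eq_sq_iff_eq_or_eq_neg.mp hsq with e | e
  · exact h e
  · subst e
    have : y = 0 := by nlinarith
    exact h (by simp [this])

lemma sq_strict_max_of_mul_nonneg {u v w : ℝ} (huv : u ≠ v) (huw : u ≠ w) (hvw : v ≠ w)
    (huv₀ : 0 ≤ u * v) (huw₀ : 0 ≤ u * w) (hvw₀ : 0 ≤ v * w) :
    (v ^ 2 < u ^ 2 ∧ w ^ 2 < u ^ 2) ∨ (u ^ 2 < v ^ 2 ∧ w ^ 2 < v ^ 2) ∨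
      (u ^ 2 < w ^ 2 ∧ v ^ 2 < w ^ 2) := by
  rcases lt_or_gt_of_ne (sq_ne_sq_of_mul_nonneg huv huv₀) with h₁ | h₁ <;>
  rcases lt_or_gt_of_ne (sq_ne_sq_of_mul_nonneg huw huw₀) with h₂ | h₂ <;>
  rcases lt_or_gt_of_ne (sq_ne_sq_of_mul_nonneg hvw hvw₀) with h₃ | h₃ <;>
  first
  | exact .inl ⟨by linarith, by linarith⟩
  | exact .inr (.inl ⟨by linarith, by linarith⟩)
  | exact .inr (.inr ⟨by linarith, by linarith⟩)

lemma FormsTriangle.eval_inter_ne {A B C O : Line} (hT : FormsTriangle A B C)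
    (hOA : ¬Parallel O A) (hOB : ¬Parallel O B) (hOC : ¬Parallel O C) :
    O.eval (inter A B) ≠ O.eval (inter A C) ∧ O.eval (inter A B) ≠ O.eval (inter B C) ∧
      O.eval (inter A C) ≠ O.eval (inter B C) := by
  have h := hT.doubleSignedArea_ne_zero
  obtain ⟨hAB, hAC, hBC, -⟩ := hT
  have hPQ : inter A B ≠ inter A C := fun e => h (by rw [e, doubleSignedArea]; ring)
  have hPR : inter A B ≠ inter B C := fun e => h (by rw [e, doubleSignedArea]; ring)
  have hQR : inter A C ≠ inter B C := fun e => h (by rw [e, doubleSignedArea]; ring)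
  exact ⟨fun e => hOA (parallel_of_eval_eq hPQ (inter_mem_left hAB) (inter_mem_left hAC) e),
    fun e => hOB (parallel_of_eval_eq hPR (inter_mem_right hAB) (inter_mem_left hBC) e),
    fun e => hOC (parallel_of_eval_eq hQR (inter_mem_right hAC) (inter_mem_right hBC) e)⟩

lemma FormsTriangle.exists_larger_of_disjoint {A B C O : Line} (hT : FormsTriangle A B C)
    (hO : O.pts ∩ openTriangle A B C = ∅)
    (hOA : ¬Parallel O A) (hOB : ¬Parallel O B) (hOC : ¬Parallel O C) :
    (FormsTriangle A B O ∧ triArea A B C < triArea A B O) ∨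
      (FormsTriangle A C O ∧ triArea A B C < triArea A C O) ∨
        (FormsTriangle B C O ∧ triArea A B C < triArea B C O) := by
  obtain ⟨huv₀, huw₀, hvw₀⟩ := hT.eval_mul_nonneg hO
  obtain ⟨huv, huw, hvw⟩ := hT.eval_inter_ne hOA hOB hOC
  rcases sq_strict_max_of_mul_nonneg huv huw hvw huv₀ huw₀ hvw₀ with
    ⟨hv, hw⟩ | ⟨hu, hw⟩ | ⟨hu, hv⟩
  · exact .inl (hT.triArea_lt_of_replace hOA hOB huv₀ huw₀ hv hw hvw)
  · have := hT.swap23.triArea_lt_of_replace hOA hOC (by rwa [mul_comm])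
      (by rwa [inter_comm B C]) hu (by rwa [inter_comm B C]) (by rwa [inter_comm B C])
    rw [triArea_swap23] at this
    exact .inr (.inl this)
  · have := hT.rotate.triArea_lt_of_replace hOB hOC
      (by rwa [inter_comm A B, mul_comm]) (by rwa [inter_comm A C, mul_comm])
      (by rwa [inter_comm A B]) (by rwa [inter_comm A C]) (by rwa [inter_comm A B, inter_comm A C])
    rw [triArea_rotate] at this
    exact .inr (.inr this)

theorem stmt5_general (n : ℕ) (L : Fin n → Line)
    (i j k m : Fin n) (hT : FormsTriangle (L i) (L j) (L k))
    (hmax : ∀ a b c : Fin n, FormsTriangle (L a) (L b) (L c) →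
      triArea (L a) (L b) (L c) ≤ triArea (L i) (L j) (L k)) :
    (Line.pts (L m) ∩ openTriangle (L i) (L j) (L k)).Nonempty ∨
      Line.Parallel (L m) (L i) ∨ Line.Parallel (L m) (L j) ∨
        Line.Parallel (L m) (L k) := by
  by_contra! h
  obtain ⟨hO, hi, hj, hk⟩ := h
  rcases hT.exists_larger_of_disjoint hO hi hj hk with ⟨hF, hlt⟩ | ⟨hF, hlt⟩ | ⟨hF, hlt⟩
  · exact (hmax i j m hF).not_gt hlt
  · exact (hmax i k m hF).not_gt hlt
  · exact (hmax j k m hF).not_gt hlt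

/-- Let the triangle formed by lines `i, j, k` of an arrangement have maximum
area among all triangles of the arrangement, and let `m` be a line of the
arrangement not supporting this triangle.  Then either `m` meets the interior
of the triangle, or `m` is parallel to one of its three sides. -/
theorem stmt5 (n : ℕ) (L : Fin n → Line) (hinj : Function.Injective L)
    (i j k m : Fin n) (hT : FormsTriangle (L i) (L j) (L k))
    (hmax : ∀ a b c : Fin n, FormsTriangle (L a) (L b) (L c) →
      triArea (L a) (L b) (L c) ≤ triArea (L i) (L j) (L k))
    (hm1 : Line.pts (L m) ≠ Line.pts (L i))
    (hm2 : Line.pts (L m) ≠ Line.pts (L j))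
    (hm3 : Line.pts (L m) ≠ Line.pts (L k)) :
    (Line.pts (L m) ∩ openTriangle (L i) (L j) (L k)).Nonempty ∨
      Line.Parallel (L m) (L i) ∨ Line.Parallel (L m) (L j) ∨
        Line.Parallel (L m) (L k) :=
  stmt5_general n L i j k m hT hmax
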